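/- The periodized Gaussian G[τ] = Σ_{m∈Z} e^{−π(τ/√N + m√N)²} is an eigenvector of the discrete Fourier transform on L²(Z/N). -/

import Mathlib

/-- Unitary discrete Fourier transform. -/
noncomputable def dftU (N : ℕ) [NeZero N] (S : ZMod N → ℂ) (ω : ZMod N) : ℂ :=
  (1 / Real.sqrt N : ℝ) *
    ∑ τ : ZMod N, S τ * Complex.exp (-(2 * Real.pi * Complex.I * ((ω * τ).val : ℂ) / N))

/-- The periodized Gaussian `G[τ] = Σ_{m∈Z} e^{−π(τ/√N + m√N)²}`. -/
noncomputable def periodizedGaussian (N : ℕ) [NeZero N] : ZMod N → ℂ :=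
  fun τ => ((∑' m : ℤ, Real.exp (-Real.pi * ((τ.val : ℝ) / Real.sqrt N + m * Real.sqrt N) ^ 2) : ℝ) : ℂ)

/-!
Both sides are values of the Jacobi theta function `θ(z, τ) = Σₙ exp(2πinz + πin²τ)`.
Splitting `n ∈ ℤ` by its residue mod `N` shows that the DFT of `G` at `ω` is
`N^{-1/2} θ(-ω/N, i/N)`, while completing the square gives `G[ω] = e^{-πω²/N} θ(iω, iN)`.
The modular transformation `τ ↦ -1/τ` of `θ` (Poisson summation for the Gaussian) turns the first
expression into the second, so `G` is a fixed point of the DFT.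
-/

open Real Complex

lemma tsum_int_eq_sum_zmod_tsum {α : Type*} [AddCommGroup α] [UniformSpace α]
    [IsUniformAddGroup α] [CompleteSpace α] [T0Space α] {N : ℕ} [NeZero N] {f : ℤ → α}
    (hf : Summable f) : ∑' n, f n = ∑ τ : ZMod N, ∑' m : ℤ, f (τ.val + m * N) := by
  -- `ZMod (n + 1)` is `Fin (n + 1)` by definition, the residue component of `Int.divModEquiv`.
  obtain ⟨n, rfl⟩ := Nat.exists_eq_succ_of_ne_zero (NeZero.ne N)
  have hfibre (r : Fin (n + 1)) : Summable fun m : ℤ ↦ f (m * (n + 1 : ℕ) + r) :=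
    hf.comp_injective fun a b h ↦ mul_right_cancel₀ (by positivity) (add_right_cancel h)
  have hprod : Summable fun p ↦ f ((Int.divModEquiv (n + 1)).symm p) :=
    (Int.divModEquiv (n + 1)).symm.summable_iff.mpr hf
  rw [← (Int.divModEquiv (n + 1)).symm.tsum_eq, hprod.tsum_prod]
  simp only [Int.divModEquiv_symm_apply, tsum_fintype]
  rw [Summable.tsum_finsetSum fun r _ ↦ hfibre r]
  exact Fintype.sum_congr _ _ fun r ↦ tsum_congr fun m ↦ congrArg f (add_comm _ _)

lemma cexp_two_pi_I_mul_intCast_div_eq {N : ℕ} [NeZero N] {k l : ℤ}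
    (h : (k : ZMod N) = l) : cexp (2 * π * I * k / N) = cexp (2 * π * I * l / N) := by
  rw [← ZMod.stdAddChar_coe, h, ZMod.stdAddChar_coe]

lemma div_sqrt_add_mul_sqrt_sq {N : ℝ} (hN : 0 < N) (x y : ℝ) :
    (x / √N + y * √N) ^ 2 = (x + y * N) ^ 2 / N := by
  have hs : √N ^ 2 = N := Real.sq_sqrt hN.le
  have hs0 : √N ≠ 0 := (Real.sqrt_pos.mpr hN).ne'
  field_simp
  rw [hs]
  ring

lemma jacobiTheta₂_term_neg_div_I_div (n : ℤ) (x N : ℂ) :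
    jacobiTheta₂_term n (-x / N) (I / N) =
      cexp (-π * n ^ 2 / N) * cexp (-(2 * π * I * x * n / N)) := by
  rw [jacobiTheta₂_term, ← Complex.exp_add]
  ring_nf
  rw [I_sq]
  ring_nf

lemma ofReal_tsum_exp_neg_pi_sq_eq_jacobiTheta₂ {N : ℝ} (hN : 0 < N) (x : ℝ) :
    ((∑' m : ℤ, rexp (-π * (x / √N + m * √N) ^ 2) : ℝ) : ℂ) =
      cexp (-π * x ^ 2 / N) * jacobiTheta₂ (I * x) (I * N) := by
  have hN0 : (N : ℂ) ≠ 0 := by exact_mod_cast hN.ne'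
  rw [jacobiTheta₂, ofReal_tsum, ← tsum_mul_left]
  refine tsum_congr fun m ↦ ?_
  rw [div_sqrt_add_mul_sqrt_sq hN, jacobiTheta₂_term, ← Complex.exp_add, ofReal_exp]
  congr 1
  push_cast
  field_simp
  ring_nf
  rw [I_sq]
  ring

lemma jacobiTheta₂_neg_div_I_div {N : ℝ} (hN : 0 < N) (x : ℝ) :
    jacobiTheta₂ (-x / N) (I / N) = √N * cexp (-π * x ^ 2 / N) * jacobiTheta₂ (I * x) (I * N) := by
  have hN0 : (N : ℂ) ≠ 0 := by exact_mod_cast hN.ne'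
  have hroot : (-I * (I / N)) ^ (1 / 2 : ℂ) = ((√N)⁻¹ : ℝ) := by
    rw [show -I * (I / N) = ((N⁻¹ : ℝ) : ℂ) by push_cast; field_simp; rw [I_sq]; ring,
      ← ofReal_ofNat, ← ofReal_one, ← ofReal_div, ← ofReal_cpow (by positivity),
      Real.sqrt_eq_rpow, Real.inv_rpow hN.le]
  have hz : -x / N / (I / N) = I * x := by field_simp; rw [I_sq]; ring
  have hτ : -1 / (I / N) = I * N := by field_simp; rw [I_sq]
  have hexp : -π * I * (-x / N) ^ 2 / (I / N) = -π * x ^ 2 / N := by field_simp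
  rw [jacobiTheta₂_functional_equation, hroot, hz, hτ, hexp]
  push_cast
  field_simp

section

variable {N : ℕ} [NeZero N]

lemma periodizedGaussian_mul_cexp_eq_tsum_jacobiTheta₂_term (ω τ : ZMod N) :
    periodizedGaussian N τ * cexp (-(2 * π * I * ((ω * τ).val : ℂ) / N)) =
      ∑' m : ℤ, jacobiTheta₂_term (τ.val + m * N) (-ω.val / N) (I / N) := by
  have hN : (0 : ℝ) < N := Nat.cast_pos.mpr (Nat.pos_of_neZero N)
  rw [periodizedGaussian, ofReal_tsum, ← tsum_mul_right]
  refine tsum_congr fun m ↦ ?_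
  rw [jacobiTheta₂_term_neg_div_I_div, div_sqrt_add_mul_sqrt_sq hN, ofReal_exp]
  congr 1
  · push_cast
    ring_nf
  · have hphase := cexp_two_pi_I_mul_intCast_div_eq (N := N)
      (k := -((ω * τ).val : ℤ)) (l := -(ω.val * (τ.val + m * N)))
      (by push_cast; simp)
    push_cast at hphase
    convert hphase using 2 <;> push_cast <;> ring

lemma dftU_periodizedGaussian (ω : ZMod N) :
    dftU N (periodizedGaussian N) ω = ((1 / √N : ℝ) : ℂ) * jacobiTheta₂ (-ω.val / N) (I / N) := by
  have hsum : Summable (jacobiTheta₂_term · (-ω.val / N : ℂ) (I / N)) :=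
    (summable_jacobiTheta₂_term_iff _ _).mpr (by simp [Nat.pos_of_neZero N])
  rw [dftU, jacobiTheta₂, tsum_int_eq_sum_zmod_tsum (N := N) hsum]
  simp_rw [periodizedGaussian_mul_cexp_eq_tsum_jacobiTheta₂_term]

end

/-- The periodized Gaussian is an eigenvector of the discrete Fourier transform. -/
theorem periodizedGaussian_eigenvector (N : ℕ) [NeZero N] :
    ∃ c : ℂ, ∀ ω : ZMod N, dftU N (periodizedGaussian N) ω = c * periodizedGaussian N ω := by
  refine ⟨1, fun ω ↦ ?_⟩
  have hN : (0 : ℝ) < N := Nat.cast_pos.mpr (Nat.pos_of_neZero N)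
  have hθ := jacobiTheta₂_neg_div_I_div hN ω.val
  rw [dftU_periodizedGaussian, periodizedGaussian, ofReal_tsum_exp_neg_pi_sq_eq_jacobiTheta₂ hN]
  push_cast at hθ ⊢
  rw [hθ]
  have hs0 : (√N : ℂ) ≠ 0 := by exact_mod_cast (Real.sqrt_pos.mpr hN).ne'
  field_simp
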